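/- Let (ρ₁,ρ₂) be density matrices on ℂ^n and (ρ₁′,ρ₂′) be density matrices on ℂ^m with ρ₁′ ≠ ρ₂′ and supp(ρ₁′) ⊆ supp(ρ₂′). Set M′ := inf{ λ : λρ₂′ − ρ₁′ ≥ 0 } and m′ := sup{ λ : ρ₁′ − λρ₂′ ≥ 0 }. Then there exists a test-and-prepare channel ℰ(ρ) = Tr[Eρ]·ξ₁ + Tr[(𝟙−E)ρ]·ξ₂ with ℰ(ρ₁) = ρ₁′ and ℰ(ρ₂) = ρ₂′ if and only if there exists an operator 0 ≤ E ≤ 𝟙ₙ with Tr[E(ρ₁ − M′ρ₂)] ≥ 0 and Tr[E(ρ₁ − m′ρ₂)] ≥ 1 − m′. -/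

import Mathlib

open scoped ComplexOrder

/-- `sup(A/B) = inf { λ : λB - A ≥ 0 }`. -/
noncomputable def supRatio {k : ℕ} (A B : Matrix (Fin k) (Fin k) ℂ) : ℝ :=
  sInf { lam : ℝ | ((lam : ℂ) • B - A).PosSemidef }

/-- `inf(A/B) = sup { λ : A - λB ≥ 0 }`. -/
noncomputable def infRatio {k : ℕ} (A B : Matrix (Fin k) (Fin k) ℂ) : ℝ :=
  sSup { lam : ℝ | (A - (lam : ℂ) • B).PosSemidef }


/-!
Put `p = Tr[E ρ₁]` and `q = Tr[E ρ₂]`. A test-and-prepare channel sends `ρ₁, ρ₂` to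
`p ξ₁ + (1 - p) ξ₂` and `q ξ₁ + (1 - q) ξ₂`; as `ρ₁' ≠ ρ₂'` we have `p ≠ q`, and replacing `E`
by `1 - E` (and swapping `ξ₁, ξ₂`) we may assume `q < p`. Solving the two equations,
`(p - q) ξ₂ = p ρ₂' - q ρ₁'` and `(p - q) ξ₁ = (1 - q) ρ₁' - (1 - p) ρ₂'`, so positivity of
`ξ₂` and `ξ₁` amounts to `M' q ≤ p` and `1 - p ≤ m' (1 - q)`, which are the two trace conditions.
Conversely these formulas define states as soon as `M'` and `m'` are attained; the support
condition makes `{λ | λ ρ₂' - ρ₁' ≥ 0}` nonempty, both sets are closed, and `m' < 1 < M'`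
forces `q < p`.
-/

open Matrix

namespace Matrix

variable {n 𝕜 : Type*} [RCLike 𝕜] [Fintype n]

open scoped MatrixOrder

theorem PosSemidef.trace_mul_nonneg {A B : Matrix n n 𝕜} (hA : A.PosSemidef) (hB : B.PosSemidef) :
    0 ≤ (A * B).trace := by
  classical
  obtain ⟨C, rfl⟩ := CStarAlgebra.nonneg_iff_eq_star_mul_self.mp hB.nonneg
  rw [star_eq_conjTranspose, ← Matrix.mul_assoc, trace_mul_cycle]
  exact (hA.mul_mul_conjTranspose_same C).trace_nonneg

theorem isClosed_setOf_posSemidef : IsClosed {M : Matrix n n 𝕜 | M.PosSemidef} := by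
  simp only [posSemidef_iff_dotProduct_mulVec, Set.ofPred_and, Set.ofPred_forall]
  refine (isClosed_eq continuous_id.matrix_conjTranspose continuous_id).inter
    (isClosed_iInter fun x => isClosed_le continuous_const ?_)
  exact continuous_const.dotProduct (continuous_id.matrix_mulVec continuous_const)

theorem eq_of_sub_posSemidef_of_trace_eq {ρ σ : Matrix n n 𝕜} (h : (σ - ρ).PosSemidef)
    (htr : ρ.trace = σ.trace) : ρ = σ :=
  (sub_eq_zero.mp (h.trace_eq_zero_iff.mp (by rw [trace_sub, htr, sub_self]))).symm

variable [DecidableEq n]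

theorem continuousOn_real_spectrum (B : Matrix n n 𝕜) (f : ℝ → ℝ) :
    ContinuousOn f (spectrum ℝ B) :=
  B.finite_real_spectrum.continuousOn _

noncomputable def supportProjection (B : Matrix n n 𝕜) : Matrix n n 𝕜 :=
  cfc (fun x : ℝ => if x = 0 then 0 else 1) B

theorem star_supportProjection (B : Matrix n n 𝕜) :
    star B.supportProjection = B.supportProjection :=
  IsSelfAdjoint.star_eq (cfc_predicate _ B)

theorem supportProjection_mul_self (B : Matrix n n 𝕜) :
    B.supportProjection * B.supportProjection = B.supportProjection := by
  rw [supportProjection, ← cfc_mul _ _ B (B.continuousOn_real_spectrum _)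
    (B.continuousOn_real_spectrum _)]
  exact cfc_congr fun x _ => by by_cases hx : x = 0 <;> simp [hx]

theorem IsHermitian.one_sub_supportProjection_mul {B : Matrix n n 𝕜} (hB : B.IsHermitian) :
    (1 - B.supportProjection) * B = 0 := by
  have hcont := B.continuousOn_real_spectrum
  calc (1 - B.supportProjection) * B
      = cfc (fun x : ℝ => (1 - if x = 0 then 0 else 1) * x) B := by
        rw [cfc_mul _ _ B (hcont _) (hcont _), cfc_sub _ _ B (hcont _) (hcont _),
          cfc_const_one ℝ B, cfc_id' ℝ B hB.isSelfAdjoint, supportProjection]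
    _ = 0 := by
        rw [← cfc_const_zero ℝ B]
        exact cfc_congr fun x _ => by by_cases hx : x = 0 <;> simp [hx]

theorem PosSemidef.exists_supportProjection_le_smul {B : Matrix n n 𝕜} (hB : B.PosSemidef) :
    ∃ c : ℝ, B.supportProjection ≤ c • B := by
  obtain ⟨c, hc⟩ := (B.finite_real_spectrum.image (·⁻¹)).bddAbove
  refine ⟨c, ?_⟩
  rw [supportProjection, ← cfc_const_mul_id c B hB.isHermitian.isSelfAdjoint]
  refine cfc_mono (hf := B.continuousOn_real_spectrum _) fun x hx => ?_
  rcases (spectrum_nonneg_of_nonneg hB.nonneg hx).eq_or_lt with rfl | hx0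
  · simp
  · have hxc : x⁻¹ ≤ c := hc ⟨x, hx, rfl⟩
    simp only [hx0.ne', if_false]
    calc (1 : ℝ) = x⁻¹ * x := (inv_mul_cancel₀ hx0.ne').symm
      _ ≤ c * x := mul_le_mul_of_nonneg_right hxc hx0.le

theorem IsHermitian.supportProjection_mul_mul_supportProjection {A B : Matrix n n 𝕜}
    (hA : A.IsHermitian) (hB : B.IsHermitian)
    (h : LinearMap.range A.toLin' ≤ LinearMap.range B.toLin') :
    B.supportProjection * A * B.supportProjection = A := by
  set P := B.supportProjection
  have hPA : (1 - P) * A = 0 := by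
    apply Matrix.toLin'.injective
    rw [map_zero, ← LinearMap.range_eq_bot, Matrix.toLin'_mul, LinearMap.range_comp, ← le_bot_iff]
    calc Submodule.map (1 - P).toLin' (LinearMap.range A.toLin')
        ≤ Submodule.map (1 - P).toLin' (LinearMap.range B.toLin') := Submodule.map_mono h
      _ = ⊥ := by
        rw [← LinearMap.range_comp, ← Matrix.toLin'_mul, hB.one_sub_supportProjection_mul,
          map_zero, LinearMap.range_zero]
  have hAP : A * (1 - P) = 0 := by
    have := congrArg star hPA
    rwa [star_mul, star_sub, star_one, B.star_supportProjection, star_zero,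
      star_eq_conjTranspose A, hA.eq] at this
  rw [sub_mul, one_mul, sub_eq_zero] at hPA
  rw [mul_sub, mul_one, sub_eq_zero] at hAP
  rw [← hPA, ← hAP]

/-- Conjugating `A ≤ r` by the support projection `P` of `B` gives `A = PAP ≤ r P`,
and `P ≤ c B` because the nonzero eigenvalues of `B` are bounded away from `0`. -/
theorem IsHermitian.exists_le_smul_of_range_le {A B : Matrix n n 𝕜} (hA : A.IsHermitian)
    (hB : B.PosSemidef) (h : LinearMap.range A.toLin' ≤ LinearMap.range B.toLin') :
    ∃ c : ℝ, A ≤ c • B := by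
  set P := B.supportProjection
  obtain ⟨r, hr, hAr⟩ : ∃ r : ℝ, 0 ≤ r ∧ A ≤ algebraMap ℝ _ r := by
    obtain ⟨r, hr⟩ := A.finite_real_spectrum.bddAbove
    exact ⟨max r 0, le_max_right _ _, (le_algebraMap_iff_spectrum_le hA.isSelfAdjoint).2
      fun x hx => (hr hx).trans (le_max_left _ _)⟩
  obtain ⟨c, hPc⟩ := hB.exists_supportProjection_le_smul
  refine ⟨r * c, ?_⟩
  calc A = star P * A * P := by
        rw [B.star_supportProjection, hA.supportProjection_mul_mul_supportProjection hB.1 h]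
    _ ≤ star P * algebraMap ℝ _ r * P := star_left_conjugate_le_conjugate hAr P
    _ = r • P := by
      rw [B.star_supportProjection, Algebra.algebraMap_eq_smul_one, mul_smul_comm, mul_one,
        smul_mul_assoc, B.supportProjection_mul_self]
    _ ≤ r • (c • B) := smul_le_smul_of_nonneg_left hPc hr
    _ = (r * c) • B := smul_smul r c B

end Matrix

section DensityMatrix

variable {n : Type*} [Fintype n]

theorem one_le_of_smul_sub_posSemidef {ρ σ : Matrix n n ℂ} (hρ : ρ.trace = 1)
    (hσ : σ.trace = 1) {lam : ℝ} (h : ((lam : ℂ) • σ - ρ).PosSemidef) : 1 ≤ lam := by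
  have := h.trace_nonneg
  rw [trace_sub, trace_smul, hρ, hσ, smul_eq_mul, mul_one, sub_nonneg] at this
  exact_mod_cast this

theorem le_one_of_sub_smul_posSemidef {ρ σ : Matrix n n ℂ} (hρ : ρ.trace = 1)
    (hσ : σ.trace = 1) {lam : ℝ} (h : (ρ - (lam : ℂ) • σ).PosSemidef) : lam ≤ 1 := by
  have := h.trace_nonneg
  rw [trace_sub, trace_smul, hρ, hσ, smul_eq_mul, mul_one, sub_nonneg] at this
  exact_mod_cast this

theorem isClosed_setOf_smul_sub_posSemidef (ρ σ : Matrix n n ℂ) :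
    IsClosed {lam : ℝ | ((lam : ℂ) • σ - ρ).PosSemidef} :=
  isClosed_setOf_posSemidef.preimage
    ((Complex.continuous_ofReal.smul continuous_const).sub continuous_const)

theorem isClosed_setOf_sub_smul_posSemidef (ρ σ : Matrix n n ℂ) :
    IsClosed {lam : ℝ | (ρ - (lam : ℂ) • σ).PosSemidef} :=
  isClosed_setOf_posSemidef.preimage
    (continuous_const.sub (Complex.continuous_ofReal.smul continuous_const))

end DensityMatrix

section Ratio

variable {k : ℕ} {ρ σ : Matrix (Fin k) (Fin k) ℂ}

theorem supRatio_le (hρ : ρ.trace = 1) (hσ : σ.trace = 1) {lam : ℝ}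
    (h : ((lam : ℂ) • σ - ρ).PosSemidef) : supRatio ρ σ ≤ lam :=
  csInf_le ⟨1, fun _ ↦ one_le_of_smul_sub_posSemidef hρ hσ⟩ h

theorem le_infRatio (hρ : ρ.trace = 1) (hσ : σ.trace = 1) {lam : ℝ}
    (h : (ρ - (lam : ℂ) • σ).PosSemidef) : lam ≤ infRatio ρ σ :=
  le_csSup ⟨1, fun _ ↦ le_one_of_sub_smul_posSemidef hρ hσ⟩ h

theorem smul_sub_posSemidef_supRatio (hρ : ρ.PosSemidef) (hρtr : ρ.trace = 1)
    (hσ : σ.PosSemidef) (hσtr : σ.trace = 1)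
    (hsupp : LinearMap.range ρ.toLin' ≤ LinearMap.range σ.toLin') :
    ((supRatio ρ σ : ℂ) • σ - ρ).PosSemidef := by
  obtain ⟨c, hc⟩ := hρ.isHermitian.exists_le_smul_of_range_le hσ hsupp
  refine (isClosed_setOf_smul_sub_posSemidef ρ σ).csInf_mem ⟨c, ?_⟩
    ⟨1, fun _ ↦ one_le_of_smul_sub_posSemidef hρtr hσtr⟩
  rwa [Set.mem_ofPred_eq, Complex.coe_smul]

theorem sub_smul_posSemidef_infRatio (hρ : ρ.PosSemidef) (hρtr : ρ.trace = 1)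
    (hσtr : σ.trace = 1) : (ρ - (infRatio ρ σ : ℂ) • σ).PosSemidef :=
  (isClosed_setOf_sub_smul_posSemidef ρ σ).csSup_mem ⟨0, by simpa using hρ⟩
    ⟨1, fun _ ↦ le_one_of_sub_smul_posSemidef hρtr hσtr⟩

theorem one_lt_supRatio (hρ : ρ.PosSemidef) (hρtr : ρ.trace = 1)
    (hσ : σ.PosSemidef) (hσtr : σ.trace = 1)
    (hsupp : LinearMap.range ρ.toLin' ≤ LinearMap.range σ.toLin') (hne : ρ ≠ σ) :
    1 < supRatio ρ σ := by
  have hM := smul_sub_posSemidef_supRatio hρ hρtr hσ hσtr hsupp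
  refine (one_le_of_smul_sub_posSemidef hρtr hσtr hM).lt_of_ne fun h ↦ hne ?_
  rw [← h, Complex.ofReal_one, one_smul] at hM
  exact eq_of_sub_posSemidef_of_trace_eq hM (hρtr.trans hσtr.symm)

theorem infRatio_lt_one (hρ : ρ.PosSemidef) (hρtr : ρ.trace = 1) (hσtr : σ.trace = 1)
    (hne : ρ ≠ σ) : infRatio ρ σ < 1 := by
  have hm := sub_smul_posSemidef_infRatio hρ hρtr hσtr
  refine (le_one_of_sub_smul_posSemidef hρtr hσtr hm).lt_of_ne fun h ↦ hne ?_
  rw [h, Complex.ofReal_one, one_smul] at hm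
  exact (eq_of_sub_posSemidef_of_trace_eq hm (hσtr.trans hρtr.symm)).symm

theorem supRatio_mul_le (hρ : ρ.trace = 1) (hσ : σ.trace = 1) {p q : ℝ} (hq : 0 < q)
    (h : (p • σ - q • ρ).PosSemidef) : supRatio ρ σ * q ≤ p := by
  have hdiv : ((p / q : ℝ) : ℂ) • σ - ρ = q⁻¹ • (p • σ - q • ρ) := by
    rw [Complex.coe_smul, smul_sub, smul_smul, smul_smul, inv_mul_cancel₀ hq.ne', one_smul,
      div_eq_inv_mul]
  have := supRatio_le hρ hσ (hdiv ▸ h.smul (inv_nonneg.mpr hq.le))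
  rwa [le_div_iff₀ hq] at this

theorem le_infRatio_mul (hρ : ρ.trace = 1) (hσ : σ.trace = 1) {p q : ℝ} (hq : 0 < q)
    (h : (q • ρ - p • σ).PosSemidef) : p ≤ infRatio ρ σ * q := by
  have hdiv : ρ - ((p / q : ℝ) : ℂ) • σ = q⁻¹ • (q • ρ - p • σ) := by
    rw [Complex.coe_smul, smul_sub, smul_smul, smul_smul, inv_mul_cancel₀ hq.ne', one_smul,
      div_eq_inv_mul]
  have := le_infRatio hρ hσ (hdiv ▸ h.smul (inv_nonneg.mpr hq.le))
  rwa [div_le_iff₀ hq] at this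

end Ratio

section Mixture

variable {n : Type*} [Fintype n]

def IsMixturePair (ρ₁ ρ₂ : Matrix n n ℂ) (p q : ℝ) : Prop :=
  ∃ ξ₁ ξ₂ : Matrix n n ℂ, ξ₁.PosSemidef ∧ ξ₁.trace = 1 ∧ ξ₂.PosSemidef ∧ ξ₂.trace = 1 ∧
    p • ξ₁ + (1 - p) • ξ₂ = ρ₁ ∧ q • ξ₁ + (1 - q) • ξ₂ = ρ₂

theorem IsMixturePair.one_sub {ρ₁ ρ₂ : Matrix n n ℂ} {p q : ℝ} (h : IsMixturePair ρ₁ ρ₂ p q) :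
    IsMixturePair ρ₁ ρ₂ (1 - p) (1 - q) := by
  obtain ⟨ξ₁, ξ₂, hξ₁, hξ₁tr, hξ₂, hξ₂tr, h₁, h₂⟩ := h
  exact ⟨ξ₂, ξ₁, hξ₂, hξ₂tr, hξ₁, hξ₁tr, by rw [← h₁]; module, by rw [← h₂]; module⟩

theorem IsMixturePair.ne {ρ₁ ρ₂ : Matrix n n ℂ} {p q : ℝ} (h : IsMixturePair ρ₁ ρ₂ p q)
    (hne : ρ₁ ≠ ρ₂) : p ≠ q := by
  obtain ⟨ξ₁, ξ₂, -, -, -, -, h₁, h₂⟩ := h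
  rintro rfl
  exact hne (h₁.symm.trans h₂)

variable {k : ℕ} {ρ₁ ρ₂ : Matrix (Fin k) (Fin k) ℂ} {p q : ℝ}

theorem IsMixturePair.ratio_bounds (h : IsMixturePair ρ₁ ρ₂ p q) (hρ₁ : ρ₁.trace = 1)
    (hρ₂ : ρ₂.trace = 1) (hq : 0 ≤ q) (hp : p ≤ 1) (hqp : q < p) :
    supRatio ρ₁ ρ₂ * q ≤ p ∧ 1 - infRatio ρ₁ ρ₂ ≤ p - infRatio ρ₁ ρ₂ * q := by
  obtain ⟨ξ₁, ξ₂, hξ₁, -, hξ₂, -, rfl, rfl⟩ := h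
  constructor
  · rcases hq.eq_or_lt with rfl | hq
    · rw [mul_zero]
      exact hqp.le
    · refine supRatio_mul_le hρ₁ hρ₂ hq ?_
      convert hξ₂.smul (sub_nonneg.mpr hqp.le) using 1
      module
  · have := le_infRatio_mul hρ₁ hρ₂ (q := 1 - q) (p := 1 - p) (by linarith) (by
      convert hξ₁.smul (sub_nonneg.mpr hqp.le) using 1
      module)
    linarith

theorem isMixturePair_of_ratio_bounds (hρ₁ : ρ₁.PosSemidef) (hρ₁tr : ρ₁.trace = 1)
    (hρ₂ : ρ₂.PosSemidef) (hρ₂tr : ρ₂.trace = 1) (hne : ρ₁ ≠ ρ₂)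
    (hsupp : LinearMap.range ρ₁.toLin' ≤ LinearMap.range ρ₂.toLin')
    (hq0 : 0 ≤ q) (hq1 : q ≤ 1) (hM : supRatio ρ₁ ρ₂ * q ≤ p)
    (hm : 1 - infRatio ρ₁ ρ₂ ≤ p - infRatio ρ₁ ρ₂ * q) :
    IsMixturePair ρ₁ ρ₂ p q := by
  set M := supRatio ρ₁ ρ₂
  set m := infRatio ρ₁ ρ₂
  have hMpsd : (M • ρ₂ - ρ₁).PosSemidef := by
    simpa only [Complex.coe_smul] using smul_sub_posSemidef_supRatio hρ₁ hρ₁tr hρ₂ hρ₂tr hsupp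
  have hmpsd : (ρ₁ - m • ρ₂).PosSemidef := by
    simpa only [Complex.coe_smul] using sub_smul_posSemidef_infRatio hρ₁ hρ₁tr hρ₂tr
  have hqp : q < p := by
    rcases hq0.eq_or_lt with rfl | hq
    · linarith [infRatio_lt_one hρ₁ hρ₁tr hρ₂tr hne]
    · nlinarith [one_lt_supRatio hρ₁ hρ₁tr hρ₂ hρ₂tr hsupp hne]
  have hpq : (p - q) * (p - q)⁻¹ = 1 := mul_inv_cancel₀ (sub_pos.mpr hqp).ne'
  have hc : 0 ≤ (p - q)⁻¹ := inv_nonneg.mpr (sub_nonneg.mpr hqp.le)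
  -- the solutions for `ξ₁, ξ₂`, each split into visibly positive summands
  refine ⟨(p - q)⁻¹ • ((1 - q) • (ρ₁ - m • ρ₂) + ((1 - q) * m - (1 - p)) • ρ₂),
    (p - q)⁻¹ • (q • (M • ρ₂ - ρ₁) + (p - q * M) • ρ₂), ?_, ?_, ?_, ?_, ?_, ?_⟩
  · exact ((hmpsd.smul (by linarith)).add (hρ₂.smul (by linarith))).smul hc
  · simp only [trace_smul, trace_add, trace_sub, hρ₁tr, hρ₂tr, Complex.real_smul, mul_one]
    exact_mod_cast (by linear_combination hpq :
      (p - q)⁻¹ * ((1 - q) * (1 - m) + ((1 - q) * m - (1 - p))) = 1)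
  · exact ((hMpsd.smul hq0).add (hρ₂.smul (by linarith))).smul hc
  · simp only [trace_smul, trace_add, trace_sub, hρ₁tr, hρ₂tr, Complex.real_smul, mul_one]
    exact_mod_cast (by linear_combination hpq :
      (p - q)⁻¹ * (q * (M - 1) + (p - q * M)) = 1)
  · linear_combination (norm := module) hpq • ρ₁
  · linear_combination (norm := module) hpq • ρ₂

end Mixture

section Effect

variable {n m : Type*} [Fintype n]

theorem re_trace_mul_sub_smul (E ρ σ : Matrix n n ℂ) (c : ℝ) :
    (E * (ρ - (c : ℂ) • σ)).trace.re = (E * ρ).trace.re - c * (E * σ).trace.re := by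
  rw [Matrix.mul_sub, trace_sub, Matrix.mul_smul, trace_smul, smul_eq_mul, Complex.sub_re,
    Complex.re_ofReal_mul]

variable {E ρ : Matrix n n ℂ}

theorem trace_mul_eq_ofReal_re (hE : E.PosSemidef) (hρ : ρ.PosSemidef) :
    (E * ρ).trace = ((E * ρ).trace.re : ℂ) :=
  Complex.eq_re_of_ofReal_le (by rw [Complex.ofReal_zero]; exact hE.trace_mul_nonneg hρ)

variable [DecidableEq n]

theorem re_trace_one_sub_mul (hρtr : ρ.trace = 1) :
    ((1 - E) * ρ).trace.re = 1 - (E * ρ).trace.re := by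
  rw [sub_mul, one_mul, trace_sub, hρtr, Complex.sub_re, Complex.one_re]

theorem re_trace_mul_mem_Icc (hE : E.PosSemidef) (hE1 : (1 - E).PosSemidef) (hρ : ρ.PosSemidef)
    (hρtr : ρ.trace = 1) : (E * ρ).trace.re ∈ Set.Icc 0 1 := by
  have h₀ := Complex.nonneg_iff.mp (hE.trace_mul_nonneg hρ)
  have h₁ := Complex.nonneg_iff.mp (hE1.trace_mul_nonneg hρ)
  rw [re_trace_one_sub_mul hρtr] at h₁
  exact ⟨h₀.1, by linarith [h₁.1]⟩

theorem trace_smul_add_trace_one_sub_smul (hE : E.PosSemidef) (hρ : ρ.PosSemidef)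
    (hρtr : ρ.trace = 1) (ξ₁ ξ₂ : Matrix m m ℂ) :
    (E * ρ).trace • ξ₁ + ((1 - E) * ρ).trace • ξ₂ =
      (E * ρ).trace.re • ξ₁ + (1 - (E * ρ).trace.re) • ξ₂ := by
  rw [sub_mul, one_mul, trace_sub, hρtr, trace_mul_eq_ofReal_re hE hρ, Complex.ofReal_re,
    ← Complex.ofReal_one, ← Complex.ofReal_sub, Complex.coe_smul, Complex.coe_smul]

end Effect

/-- Lemma 8 of the paper: with `M' = sup(ρ₁'/ρ₂')` and `m' = inf(ρ₁'/ρ₂')`, a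
test-and-prepare channel `ℰ(ρ) = Tr[Eρ]ξ₁ + Tr[(𝟙-E)ρ]ξ₂` with `ℰ(ρ₁) = ρ₁'` and
`ℰ(ρ₂) = ρ₂'` exists if and only if there is an operator `0 ≤ E ≤ 𝟙` with
`Tr[E(ρ₁ - M'ρ₂)] ≥ 0` and `Tr[E(ρ₁ - m'ρ₂)] ≥ 1 - m'`. -/
theorem test_and_prepare_iff_effect
    {n m : ℕ} (ρ₁ ρ₂ : Matrix (Fin n) (Fin n) ℂ) (ρ₁' ρ₂' : Matrix (Fin m) (Fin m) ℂ)
    (hρ₁ : ρ₁.PosSemidef) (hρ₁tr : ρ₁.trace = 1)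
    (hρ₂ : ρ₂.PosSemidef) (hρ₂tr : ρ₂.trace = 1)
    (hρ₁' : ρ₁'.PosSemidef) (hρ₁'tr : ρ₁'.trace = 1)
    (hρ₂' : ρ₂'.PosSemidef) (hρ₂'tr : ρ₂'.trace = 1)
    (hne : ρ₁' ≠ ρ₂')
    (hsupp : LinearMap.range (Matrix.toLin' ρ₁') ≤ LinearMap.range (Matrix.toLin' ρ₂'))
    (M' m' : ℝ) (hM' : M' = supRatio ρ₁' ρ₂') (hm' : m' = infRatio ρ₁' ρ₂') :
    (∃ (E : Matrix (Fin n) (Fin n) ℂ) (ξ₁ ξ₂ : Matrix (Fin m) (Fin m) ℂ),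
        E.PosSemidef ∧ ((1 : Matrix (Fin n) (Fin n) ℂ) - E).PosSemidef ∧
        ξ₁.PosSemidef ∧ ξ₁.trace = 1 ∧ ξ₂.PosSemidef ∧ ξ₂.trace = 1 ∧
        (E * ρ₁).trace • ξ₁ + (((1 : Matrix (Fin n) (Fin n) ℂ) - E) * ρ₁).trace • ξ₂ = ρ₁' ∧
        (E * ρ₂).trace • ξ₁ + (((1 : Matrix (Fin n) (Fin n) ℂ) - E) * ρ₂).trace • ξ₂ = ρ₂') ↔
      (∃ E : Matrix (Fin n) (Fin n) ℂ,
        E.PosSemidef ∧ ((1 : Matrix (Fin n) (Fin n) ℂ) - E).PosSemidef ∧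
        0 ≤ (E * (ρ₁ - (M' : ℂ) • ρ₂)).trace.re ∧
        1 - m' ≤ (E * (ρ₁ - (m' : ℂ) • ρ₂)).trace.re) := by
  subst hM' hm'
  simp only [re_trace_mul_sub_smul]
  constructor
  · rintro ⟨E, ξ₁, ξ₂, hE, hE1, hξ₁, hξ₁tr, hξ₂, hξ₂tr, h₁, h₂⟩
    rw [trace_smul_add_trace_one_sub_smul hE hρ₁ hρ₁tr] at h₁
    rw [trace_smul_add_trace_one_sub_smul hE hρ₂ hρ₂tr] at h₂
    have hmix : IsMixturePair ρ₁' ρ₂' _ _ := ⟨ξ₁, ξ₂, hξ₁, hξ₁tr, hξ₂, hξ₂tr, h₁, h₂⟩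
    have hp := re_trace_mul_mem_Icc hE hE1 hρ₁ hρ₁tr
    have hq := re_trace_mul_mem_Icc hE hE1 hρ₂ hρ₂tr
    rcases (hmix.ne hne).lt_or_gt with hpq | hqp
    · obtain ⟨hM, hm⟩ := hmix.one_sub.ratio_bounds hρ₁'tr hρ₂'tr (by linarith [hq.2])
        (by linarith [hp.1]) (by linarith)
      refine ⟨1 - E, hE1, by rwa [sub_sub_cancel], ?_, ?_⟩ <;>
        rw [re_trace_one_sub_mul hρ₁tr, re_trace_one_sub_mul hρ₂tr] <;> linarith
    · obtain ⟨hM, hm⟩ := hmix.ratio_bounds hρ₁'tr hρ₂'tr hq.1 hp.2 hqp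
      exact ⟨E, hE, hE1, by linarith, by linarith⟩
  · rintro ⟨E, hE, hE1, hM, hm⟩
    have hq := re_trace_mul_mem_Icc hE hE1 hρ₂ hρ₂tr
    obtain ⟨ξ₁, ξ₂, hξ₁, hξ₁tr, hξ₂, hξ₂tr, h₁, h₂⟩ :=
      isMixturePair_of_ratio_bounds (p := (E * ρ₁).trace.re) hρ₁' hρ₁'tr hρ₂' hρ₂'tr hne hsupp
        hq.1 hq.2 (by linarith) (by linarith)
    refine ⟨E, ξ₁, ξ₂, hE, hE1, hξ₁, hξ₁tr, hξ₂, hξ₂tr, ?_, ?_⟩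
    · rwa [trace_smul_add_trace_one_sub_smul hE hρ₁ hρ₁tr]
    · rwa [trace_smul_add_trace_one_sub_smul hE hρ₂ hρ₂tr]
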